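/- arXiv:0806.4203 — 2 statements merged into one kernel-verified Lean document; each statement's English description precedes it below -/
import Mathlib

section
/- Let μ be a finite positive measure on the open unit disc and let α > 0. Define the Luecking sets R_{n,j} = {z : 1 − 2^{−n} ≤ |z| < 1 − 2^{−n−1}, 2jπ/2^n ≤ arg z < 2(j+1)π/2^n} and the dyadic Carleson windows W_{n,j} = {z : 1 − 2^{−n} ≤ |z| < 1, 2jπ/2^n ≤ arg z < 2(j+1)π/2^n} for n ≥ 1 and 0 ≤ j ≤ 2^n − 1. Then ∑_{n≥1} ∑_{j=0}^{2^n−1} 2^{nα} μ(R_{n,j})^α < ∞ if and only if ∑_{n≥1} ∑_{j=0}^{2^n−1} 2^{nα} μ(W_{n,j})^α < ∞. -/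
/-!
Every Luecking set lies in the window with the same indices, which gives one direction. Conversely,
the window `W_{n,j}` is covered by the `2^t` Luecking sets of level `n + t` below it, `t ≥ 0`.
Within one level, `(∑ x_k)^α ≤ (2^t)^(α - min α 1) ∑ x_k^α` (Hölder for `α ≥ 1`, subadditivity of
`x ↦ x^α` for `α ≤ 1`); across the levels, domination of the terms by a geometric sequence costs
only a factor `2^(tδ)` for any `δ > 0`. Taking `δ < min α 1`, the mass of a Luecking set of level
`m` is charged to its ancestor windows with weights decaying geometrically in `m - n`, so the window
sum is at most a constant times the Luecking sum.
-/

open MeasureTheory Real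
open scoped ENNReal

/-- argument in [0, 2π) -/
noncomputable def arg2pi (z : ℂ) : ℝ :=
  if Complex.arg z < 0 then Complex.arg z + 2 * π else Complex.arg z

/-- Luecking sets -/
def LueckingSet (n j : ℕ) : Set ℂ :=
  {z : ℂ | 1 - 2 ^ (-(n : ℝ)) ≤ ‖z‖ ∧ ‖z‖ < 1 - 2 ^ (-(n : ℝ) - 1) ∧
    2 * (j : ℝ) * π / 2 ^ (n : ℕ) ≤ arg2pi z ∧ arg2pi z < 2 * ((j : ℝ) + 1) * π / 2 ^ (n : ℕ)}

/-- dyadic Carleson windows -/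
def DyadicWindow (n j : ℕ) : Set ℂ :=
  {z : ℂ | 1 - 2 ^ (-(n : ℝ)) ≤ ‖z‖ ∧ ‖z‖ < 1 ∧
    2 * (j : ℝ) * π / 2 ^ (n : ℕ) ≤ arg2pi z ∧ arg2pi z < 2 * ((j : ℝ) + 1) * π / 2 ^ (n : ℕ)}

theorem tsum_rpow_le_const_mul_tsum_pow_mul_rpow {α : ℝ} (hα : 0 < α) {q : ℝ≥0∞}
    (hq : 1 < q) (hq_top : q ≠ ⊤) (f : ℕ → ℝ≥0∞) :
    (∑' t, f t) ^ α ≤ (1 - q⁻¹)⁻¹ ^ α * ∑' t, (q ^ t * f t) ^ α := by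
  set B := ∑' t, (q ^ t * f t) ^ α
  have hf : ∀ t, f t ≤ q⁻¹ ^ t * B ^ α⁻¹ := fun t => by
    have h : q ^ t * f t ≤ B ^ α⁻¹ := by
      rw [← ENNReal.rpow_le_rpow_iff hα, ENNReal.rpow_inv_rpow hα.ne']
      exact ENNReal.le_tsum t
    rwa [← ENNReal.inv_pow,
      ← ENNReal.mul_le_iff_le_inv (pow_ne_zero t (zero_lt_one.trans hq).ne')
        (ENNReal.pow_ne_top hq_top)]
  calc (∑' t, f t) ^ α ≤ (∑' t, q⁻¹ ^ t * B ^ α⁻¹) ^ α := by gcongr; exact hf _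
    _ = (1 - q⁻¹)⁻¹ ^ α * B := by
      rw [ENNReal.tsum_mul_right, ENNReal.tsum_geometric, ENNReal.mul_rpow_of_nonneg _ _ hα.le,
        ENNReal.rpow_inv_rpow hα.ne']

theorem finset_sum_rpow_le_sum_rpow {ι : Type*} {α : ℝ} (hα : 0 < α) (hα1 : α ≤ 1)
    (s : Finset ι) (g : ι → ℝ≥0∞) : (∑ k ∈ s, g k) ^ α ≤ ∑ k ∈ s, g k ^ α := by
  classical
  induction s using Finset.induction with
  | empty => simp [ENNReal.zero_rpow_of_pos hα]
  | insert a s ha ih =>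
    rw [Finset.sum_insert ha, Finset.sum_insert ha]
    exact (ENNReal.rpow_add_le_add_rpow _ _ hα.le hα1).trans (by gcongr)

theorem finset_sum_rpow_le_card_rpow_mul_sum_rpow {ι : Type*} {α : ℝ} (hα : 0 < α)
    (s : Finset ι) (g : ι → ℝ≥0∞) :
    (∑ k ∈ s, g k) ^ α ≤ (s.card : ℝ≥0∞) ^ (α - min α 1) * ∑ k ∈ s, g k ^ α := by
  rcases le_total α 1 with hα1 | hα1
  · simpa [min_eq_left hα1] using finset_sum_rpow_le_sum_rpow hα hα1 s g
  · simpa [min_eq_right hα1] using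
      ENNReal.rpow_sum_le_const_mul_sum_rpow hα1 (s := s) (f := g)

theorem card_Ico_mul_succ_mul (j d : ℕ) : (Finset.Ico (j * d) ((j + 1) * d)).card = d := by
  rw [Nat.card_Ico, Nat.succ_mul, Nat.add_sub_cancel_left]

theorem sum_range_sum_Ico_mul {M : Type*} [AddCommMonoid M] (N d : ℕ) (g : ℕ → M) :
    ∑ j ∈ Finset.range N, ∑ k ∈ Finset.Ico (j * d) ((j + 1) * d), g k
      = ∑ k ∈ Finset.range (N * d), g k := by
  induction N with
  | zero => simp
  | succ N ih =>
    rw [Finset.sum_range_succ, ih, Finset.range_eq_Ico, Finset.range_eq_Ico,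
      Finset.sum_Ico_consecutive g (Nat.zero_le _) (Nat.mul_le_mul_right d N.le_succ)]

theorem sum_range_tsum_mul_sum_Ico_mul_two_pow (ρ : ℝ≥0∞) (F : ℕ → ℕ → ℝ≥0∞) (n : ℕ) :
    ∑ j ∈ Finset.range (2 ^ (n + 1)),
        ∑' t, ρ ^ t * ∑ k ∈ Finset.Ico (j * 2 ^ t) ((j + 1) * 2 ^ t), F (n + t) k =
      ∑' t, ρ ^ t * ∑ k ∈ Finset.range (2 ^ (n + t + 1)), F (n + t) k := by
  rw [← Summable.tsum_finsetSum fun _ _ => ENNReal.summable]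
  congr 1 with t
  rw [← Finset.mul_sum, sum_range_sum_Ico_mul, ← pow_add, Nat.add_right_comm]

theorem tsum_tsum_pow_mul_add_le {ρ : ℝ≥0∞} (G : ℕ → ℝ≥0∞) :
    ∑' n, ∑' t, ρ ^ t * G (n + t) ≤ (1 - ρ)⁻¹ * ∑' m, G m := by
  calc ∑' n, ∑' t, ρ ^ t * G (n + t) = ∑' t, ρ ^ t * ∑' n, G (n + t) := by
        rw [ENNReal.tsum_comm]; simp only [ENNReal.tsum_mul_left]
    _ ≤ ∑' t, ρ ^ t * ∑' m, G m := by
        refine ENNReal.tsum_le_tsum fun t => mul_le_mul_right ?_ _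
        exact ENNReal.tsum_comp_le_tsum_of_injective (add_left_injective t) G
    _ = (1 - ρ)⁻¹ * ∑' m, G m := by rw [ENNReal.tsum_mul_right, ENNReal.tsum_geometric]

theorem two_rpow_mul_two_rpow (a b : ℝ) : (2 : ℝ≥0∞) ^ a * 2 ^ b = 2 ^ (a + b) :=
  (ENNReal.rpow_add a b two_ne_zero ENNReal.ofNat_ne_top).symm

theorem exists_rpow_tsum_sum_le {α : ℝ} (hα : 0 < α) :
    ∃ K ≠ ⊤, ∃ ρ < 1, ∀ s : ℕ → Finset ℕ, (∀ t, (s t).card = 2 ^ t) →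
      ∀ x : ℕ → ℕ → ℝ≥0∞, (∑' t, ∑ k ∈ s t, x t k) ^ α ≤
        K * ∑' t : ℕ, ρ ^ t * ((2 : ℝ≥0∞) ^ ((t : ℝ) * α) * ∑ k ∈ s t, x t k ^ α) := by
  -- any `0 < δ < min α 1` works: the weight `2^(tδ)` is then absorbed by `2^(t min α 1)`
  set δ := min α 1 / 2
  have hδ : 0 < δ := by positivity
  set q : ℝ≥0∞ := 2 ^ (δ / α)
  have hq : 1 < q := ENNReal.one_lt_rpow (by norm_num) (by positivity)
  have hq_top : q ≠ ⊤ := ENNReal.rpow_ne_top_of_nonneg (by positivity) ENNReal.ofNat_ne_top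
  refine ⟨(1 - q⁻¹)⁻¹ ^ α, ?_, 2 ^ (-δ), ?_, fun s hs x => ?_⟩
  · refine ENNReal.rpow_ne_top_of_nonneg hα.le (ENNReal.inv_ne_top.mpr ?_)
    exact (tsub_pos_of_lt (ENNReal.inv_lt_one.mpr hq)).ne'
  · exact ENNReal.rpow_lt_one_of_one_lt_of_neg (by norm_num) (by linarith)
  have hweight : ∀ t : ℕ, (q ^ t) ^ α * ((2 ^ t : ℕ) : ℝ≥0∞) ^ (α - min α 1) =
      (2 ^ (-δ)) ^ t * (2 : ℝ≥0∞) ^ ((t : ℝ) * α) := fun t => by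
    simp only [q, ← ENNReal.rpow_natCast, Nat.cast_pow, Nat.cast_ofNat, ← ENNReal.rpow_mul,
      two_rpow_mul_two_rpow]
    congr 1
    field_simp
    ring
  refine (tsum_rpow_le_const_mul_tsum_pow_mul_rpow hα hq hq_top _).trans ?_
  gcongr with t
  calc (q ^ t * ∑ k ∈ s t, x t k) ^ α
      = (q ^ t) ^ α * (∑ k ∈ s t, x t k) ^ α := ENNReal.mul_rpow_of_nonneg _ _ hα.le
    _ ≤ (q ^ t) ^ α * (((s t).card : ℝ≥0∞) ^ (α - min α 1) * ∑ k ∈ s t, x t k ^ α) := by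
      gcongr; exact finset_sum_rpow_le_card_rpow_mul_sum_rpow hα _ _
    _ = (2 ^ (-δ)) ^ t * ((2 : ℝ≥0∞) ^ ((t : ℝ) * α) * ∑ k ∈ s t, x t k ^ α) := by
      rw [hs, ← mul_assoc, hweight, mul_assoc]

/-- Level `n` here is level `n + 1` of the paper: the sum is
`∑_{n ≥ 1} ∑_{j < 2^n} 2^{nα} a_{n-1,j}^α`. -/
noncomputable def dyadicEnergy (α : ℝ) (a : ℕ → ℕ → ℝ≥0∞) : ℝ≥0∞ :=
  ∑' n : ℕ, ∑ j ∈ Finset.range (2 ^ (n + 1)), (2 : ℝ≥0∞) ^ (((n : ℝ) + 1) * α) * a n j ^ α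

theorem dyadicEnergy_mono {α : ℝ} (hα : 0 ≤ α) {a b : ℕ → ℕ → ℝ≥0∞}
    (hab : ∀ n j, a n j ≤ b n j) : dyadicEnergy α a ≤ dyadicEnergy α b :=
  ENNReal.tsum_le_tsum fun n => Finset.sum_le_sum fun j _ => by gcongr; exact hab n j

theorem exists_dyadicEnergy_le_mul_of_le_tsum_descendants {α : ℝ} (hα : 0 < α) :
    ∃ C ≠ ⊤, ∀ a b : ℕ → ℕ → ℝ≥0∞,
      (∀ n j, b n j ≤ ∑' t, ∑ k ∈ Finset.Ico (j * 2 ^ t) ((j + 1) * 2 ^ t), a (n + t) k) →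
      dyadicEnergy α b ≤ C * dyadicEnergy α a := by
  obtain ⟨K, hK, ρ, hρ, hbound⟩ := exists_rpow_tsum_sum_le hα
  refine ⟨K * (1 - ρ)⁻¹, ENNReal.mul_ne_top hK (ENNReal.inv_ne_top.mpr (tsub_pos_of_lt hρ).ne'),
    fun a b hab => ?_⟩
  let F (m k : ℕ) : ℝ≥0∞ := (2 : ℝ≥0∞) ^ (((m : ℝ) + 1) * α) * a m k ^ α
  let G (m : ℕ) : ℝ≥0∞ := ∑ k ∈ Finset.range (2 ^ (m + 1)), F m k
  have hterm : ∀ n j : ℕ, (2 : ℝ≥0∞) ^ (((n : ℝ) + 1) * α) * b n j ^ α ≤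
      K * ∑' t : ℕ, ρ ^ t * ∑ k ∈ Finset.Ico (j * 2 ^ t) ((j + 1) * 2 ^ t), F (n + t) k :=
    fun n j => calc
      (2 : ℝ≥0∞) ^ (((n : ℝ) + 1) * α) * b n j ^ α
        ≤ 2 ^ (((n : ℝ) + 1) * α) * (K * ∑' t : ℕ, ρ ^ t * ((2 : ℝ≥0∞) ^ ((t : ℝ) * α) *
            ∑ k ∈ Finset.Ico (j * 2 ^ t) ((j + 1) * 2 ^ t), a (n + t) k ^ α)) := by
          gcongr
          exact (ENNReal.rpow_le_rpow (hab n j) hα.le).trans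
            (hbound _ (fun t => card_Ico_mul_succ_mul j (2 ^ t)) fun t k => a (n + t) k)
      _ = _ := by
          rw [mul_left_comm, ← ENNReal.tsum_mul_left]
          congr 2 with t
          dsimp only [F]
          rw [mul_left_comm _ (ρ ^ t), ← mul_assoc (2 ^ _), two_rpow_mul_two_rpow,
            Finset.mul_sum]
          push_cast
          ring_nf
  calc dyadicEnergy α b
      ≤ ∑' n : ℕ, ∑ j ∈ Finset.range (2 ^ (n + 1)),
          K * ∑' t : ℕ, ρ ^ t * ∑ k ∈ Finset.Ico (j * 2 ^ t) ((j + 1) * 2 ^ t), F (n + t) k :=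
        ENNReal.tsum_le_tsum fun n => Finset.sum_le_sum fun j _ => hterm n j
    _ = K * ∑' n, ∑' t, ρ ^ t * G (n + t) := by
        simp only [← Finset.mul_sum, sum_range_tsum_mul_sum_Ico_mul_two_pow, ENNReal.tsum_mul_left]
        rfl
    _ ≤ K * ((1 - ρ)⁻¹ * ∑' m, G m) := by gcongr; exact tsum_tsum_pow_mul_add_le G
    _ = K * (1 - ρ)⁻¹ * dyadicEnergy α a := by rw [mul_assoc]; rfl

theorem exists_dyadic_level {s : ℝ} (hs : 0 < s) {n : ℕ} (hsn : s ≤ 2 ^ (-(n : ℝ))) :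
    ∃ t : ℕ, 2 ^ (-((n + t : ℕ) : ℝ) - 1) < s ∧ s ≤ 2 ^ (-((n + t : ℕ) : ℝ)) := by
  have hpow : ∀ m : ℕ, (2 : ℝ) ^ (-(m : ℝ)) = ((2 : ℝ) ^ m)⁻¹ := fun m => by
    rw [Real.rpow_neg zero_le_two, Real.rpow_natCast]
  rw [hpow] at hsn
  obtain ⟨t, ht1, ht2⟩ := exists_nat_pow_near (x := ((2 : ℝ) ^ n)⁻¹ / s)
    ((one_le_div hs).mpr hsn) one_lt_two
  refine ⟨t, ?_, ?_⟩
  · rw [Real.rpow_sub two_pos, hpow, Real.rpow_one, pow_add]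
    rw [div_lt_iff₀ hs, pow_succ] at ht2
    rw [div_lt_iff₀ two_pos, mul_inv, mul_comm, inv_mul_lt_iff₀ (by positivity)]
    linarith
  · rw [hpow, pow_add, mul_inv, ← div_eq_mul_inv]
    rwa [le_div_iff₀ hs, mul_comm, ← le_div_iff₀ (by positivity)] at ht1

theorem exists_mem_Ico_floor {x : ℝ} {j : ℕ} (hjx : (j : ℝ) ≤ x) (hxj : x < j + 1) (t : ℕ) :
    ∃ k ∈ Finset.Ico (j * 2 ^ t) ((j + 1) * 2 ^ t), (k : ℝ) ≤ x * 2 ^ t ∧ x * 2 ^ t < k + 1 := by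
  have hx : 0 ≤ x * 2 ^ t := by have := (Nat.cast_nonneg j).trans hjx; positivity
  refine ⟨⌊x * 2 ^ t⌋₊, Finset.mem_Ico.mpr ⟨Nat.le_floor ?_, (Nat.floor_lt hx).mpr ?_⟩,
    Nat.floor_le hx, Nat.lt_floor_add_one _⟩
  · push_cast; gcongr
  · push_cast; gcongr

theorem angle_bounds_iff (n j : ℕ) (θ : ℝ) :
    (2 * (j : ℝ) * π / 2 ^ n ≤ θ ∧ θ < 2 * ((j : ℝ) + 1) * π / 2 ^ n) ↔
      ((j : ℝ) ≤ θ * 2 ^ n / (2 * π) ∧ θ * 2 ^ n / (2 * π) < j + 1) := by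
  have h2n : (0 : ℝ) < 2 ^ n := by positivity
  rw [div_le_iff₀ h2n, lt_div_iff₀ h2n, le_div_iff₀ two_pi_pos, div_lt_iff₀ two_pi_pos]
  constructor <;> rintro ⟨h1, h2⟩ <;> constructor <;> linarith

theorem LueckingSet_subset_DyadicWindow (n j : ℕ) : LueckingSet n j ⊆ DyadicWindow n j :=
  fun _ ⟨h1, h2, h3⟩ => ⟨h1, h2.trans_le (by linarith [rpow_pos_of_pos two_pos (-(n : ℝ) - 1)]), h3⟩

theorem DyadicWindow_subset_iUnion_LueckingSet (n j : ℕ) :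
    DyadicWindow n j ⊆
      ⋃ t, ⋃ k ∈ Finset.Ico (j * 2 ^ t) ((j + 1) * 2 ^ t), LueckingSet (n + t) k := by
  rintro z ⟨hr1, hr2, hθ⟩
  rw [angle_bounds_iff] at hθ
  obtain ⟨t, ht1, ht2⟩ := exists_dyadic_level (s := 1 - ‖z‖) (by linarith) (by linarith)
  obtain ⟨k, hk, hk1, hk2⟩ := exists_mem_Ico_floor hθ.1 hθ.2 t
  have hscale : arg2pi z * 2 ^ (n + t) / (2 * π) = arg2pi z * 2 ^ n / (2 * π) * 2 ^ t := by
    rw [pow_add]; ring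
  simp only [Set.mem_iUnion]
  exact ⟨t, k, hk, by linarith, by linarith, (angle_bounds_iff _ _ _).mpr (hscale ▸ ⟨hk1, hk2⟩)⟩

theorem measure_DyadicWindow_le_tsum_LueckingSet (μ : Measure ℂ) (n j : ℕ) :
    μ (DyadicWindow n j) ≤
      ∑' t, ∑ k ∈ Finset.Ico (j * 2 ^ t) ((j + 1) * 2 ^ t), μ (LueckingSet (n + t) k) :=
  (measure_mono (DyadicWindow_subset_iUnion_LueckingSet n j)).trans <|
    (measure_iUnion_le _).trans (ENNReal.tsum_le_tsum fun _ => measure_biUnion_finset_le _ _)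

theorem luecking_vs_carleson_general (μ : Measure ℂ) (α : ℝ) (hα : 0 < α) :
    (∑' n : ℕ, ∑ j ∈ Finset.range (2 ^ (n + 1)),
        (2 : ENNReal) ^ (((n : ℝ) + 1) * α) * (μ (LueckingSet (n + 1) j)) ^ α) ≠ ⊤ ↔
    (∑' n : ℕ, ∑ j ∈ Finset.range (2 ^ (n + 1)),
        (2 : ENNReal) ^ (((n : ℝ) + 1) * α) * (μ (DyadicWindow (n + 1) j)) ^ α) ≠ ⊤ := by
  change dyadicEnergy α (fun n j => μ (LueckingSet (n + 1) j)) ≠ ⊤ ↔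
    dyadicEnergy α (fun n j => μ (DyadicWindow (n + 1) j)) ≠ ⊤
  obtain ⟨C, hC, hW_le⟩ := exists_dyadicEnergy_le_mul_of_le_tsum_descendants hα
  constructor
  · intro hR
    refine ne_top_of_le_ne_top (ENNReal.mul_ne_top hC hR) (hW_le _ _ fun n j => ?_)
    simpa only [Nat.add_right_comm n 1] using measure_DyadicWindow_le_tsum_LueckingSet μ (n + 1) j
  · intro hW
    exact ne_top_of_le_ne_top hW <|
      dyadicEnergy_mono hα.le fun n j => measure_mono (LueckingSet_subset_DyadicWindow _ _)

theorem luecking_vs_carleson (μ : Measure ℂ) [IsFiniteMeasure μ]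
    (hμ : μ {z : ℂ | 1 ≤ ‖z‖} = 0) (α : ℝ) (hα : 0 < α) :
    (∑' n : ℕ, ∑ j ∈ Finset.range (2 ^ (n + 1)),
        (2 : ENNReal) ^ (((n : ℝ) + 1) * α) * (μ (LueckingSet (n + 1) j)) ^ α) ≠ ⊤ ↔
    (∑' n : ℕ, ∑ j ∈ Finset.range (2 ^ (n + 1)),
        (2 : ENNReal) ^ (((n : ℝ) + 1) * α) * (μ (DyadicWindow (n + 1) j)) ^ α) ≠ ⊤ :=
  luecking_vs_carleson_general μ α hα
end

section
/- Let 0 < β < 1 and c_k = (2/π) ∫_0^π t^β cos(kt) dt for positive integers k. Then k^{β+1} c_k converges, as k → ∞, to −(2β/π) ∫_0^∞ x^{β−1} sin x dx, and this limit is negative. -/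
/-!
Substituting `x = k t` and integrating by parts (the boundary term `(kπ)^β sin (kπ)`
vanishes) gives `k^(β+1) c_k = -(2β/π) ∫_0^{kπ} x^(β-1) sin x`, whose limit is `-(2β/π) I`.
For the sign, fold each period `[2πn, 2πn + 2π]` onto its first half: the integral over it
becomes `∫ (x^(β-1) - (x+π)^(β-1)) sin x`, which is nonnegative since `x^(β-1)` decreases and
`sin ≥ 0` there, and positive for `n = 0`. So the partial integrals over `[0, 2πn]` increase,
and `I > 0`.
-/

open Real Filter intervalIntegral Set
open MeasureTheory (volume)

theorem intervalIntegral.integral_add_two_mul_eq_integral_add_comp_add {f : ℝ → ℝ}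
    (hf : Continuous f) (a p : ℝ) :
    ∫ x in a..a + 2 * p, f x = ∫ x in a..a + p, (f x + f (x + p)) := by
  rw [integral_add (g := fun x => f (x + p)) (hf.intervalIntegrable _ _)
      ((hf.comp (continuous_add_const p)).intervalIntegrable _ _),
    integral_comp_add_right f p, show a + p + p = a + 2 * p by ring,
    integral_add_adjacent_intervals (hf.intervalIntegrable _ _) (hf.intervalIntegrable _ _)]

section RpowSin

variable {β : ℝ}

theorem continuous_rpow_sub_one_mul_sin (hβ : 0 < β) :
    Continuous fun x : ℝ => x ^ (β - 1) * sin x := by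
  have hsinc : (fun x : ℝ => x ^ (β - 1) * sin x) = fun x => x ^ β * sinc x := by
    funext x
    rcases eq_or_ne x 0 with rfl | hx
    · simp [zero_rpow hβ.ne']
    · rw [sinc_of_ne_zero hx, rpow_sub_one hx]
      ring
  rw [hsinc]
  exact (continuous_rpow_const hβ.le).mul continuous_sinc

theorem integral_rpow_mul_cos (hβ : 0 < β) {T : ℝ} (hT : 0 ≤ T) :
    ∫ x in 0..T, x ^ β * cos x = T ^ β * sin T - β * ∫ x in 0..T, x ^ (β - 1) * sin x := by
  have hderiv : ∀ x ∈ Ioo 0 T, HasDerivAt (fun x : ℝ => x ^ β * sin x)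
      (β * (x ^ (β - 1) * sin x) + x ^ β * cos x) x := fun x hx =>
    ((hasDerivAt_rpow_const (Or.inl hx.1.ne')).mul (hasDerivAt_sin x)).congr_deriv (by ring)
  have hint₁ : IntervalIntegrable (fun x : ℝ => β * (x ^ (β - 1) * sin x)) volume 0 T :=
    (continuous_const.mul (continuous_rpow_sub_one_mul_sin hβ)).intervalIntegrable _ _
  have hint₂ : IntervalIntegrable (fun x : ℝ => x ^ β * cos x) volume 0 T :=
    ((continuous_rpow_const hβ.le).mul continuous_cos).intervalIntegrable _ _
  have hftc := integral_eq_sub_of_hasDerivAt_of_le hT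
    ((continuous_rpow_const hβ.le).mul continuous_sin).continuousOn hderiv (hint₁.add hint₂)
  rw [integral_add hint₁ hint₂, integral_const_mul] at hftc
  simp only [Pi.mul_apply, sin_zero, mul_zero, sub_zero] at hftc
  linarith

theorem integral_rpow_mul_comp_mul (f : ℝ → ℝ) {k b : ℝ} (hk : 0 < k) (hb : 0 ≤ b) :
    k ^ (β + 1) * ∫ t in 0..b, t ^ β * f (k * t) = ∫ x in 0..k * b, x ^ β * f x := by
  have hsubst := integral_comp_mul_left (fun x => x ^ β * f x) hk.ne' (a := 0) (b := b)
  rw [mul_zero, smul_eq_mul] at hsubst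
  have hpow :
      ∫ t in 0..b, (k * t) ^ β * f (k * t) = k ^ β * ∫ t in 0..b, t ^ β * f (k * t) := by
    rw [← integral_const_mul]
    refine integral_congr fun t ht => ?_
    rw [uIcc_of_le hb] at ht
    simp only [mul_rpow hk.le ht.1, mul_assoc]
  rw [hpow] at hsubst
  rw [rpow_add_one hk.ne', mul_comm (k ^ β) k, mul_assoc, hsubst, mul_inv_cancel_left₀ hk.ne']

theorem natCast_rpow_mul_integral_rpow_mul_cos_mul (hβ : 0 < β) {k : ℕ} (hk : k ≠ 0) :
    (k : ℝ) ^ (β + 1) * ∫ t in 0..π, t ^ β * cos (k * t)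
      = -β * ∫ x in 0..k * π, x ^ (β - 1) * sin x := by
  rw [integral_rpow_mul_comp_mul cos (Nat.cast_pos.2 (Nat.pos_of_ne_zero hk)) pi_pos.le,
    integral_rpow_mul_cos hβ (by positivity), sin_nat_mul_pi]
  ring

theorem rpow_sub_one_mul_sin_add_comp_add_pi :
    (fun x : ℝ => x ^ (β - 1) * sin x + (x + π) ^ (β - 1) * sin (x + π))
      = fun x => (x ^ (β - 1) - (x + π) ^ (β - 1)) * sin x := by
  funext x
  rw [sin_add_pi]
  ring

theorem integral_rpow_sub_one_mul_sin_add_two_pi (hβ : 0 < β) (a : ℝ) :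
    ∫ x in a..a + 2 * π, x ^ (β - 1) * sin x
      = ∫ x in a..a + π, (x ^ (β - 1) - (x + π) ^ (β - 1)) * sin x := by
  rw [integral_add_two_mul_eq_integral_add_comp_add (continuous_rpow_sub_one_mul_sin hβ),
    rpow_sub_one_mul_sin_add_comp_add_pi]

theorem integral_rpow_sub_one_mul_sin_period_nonneg (hβ₀ : 0 < β) (hβ₁ : β ≤ 1) (n : ℕ) :
    0 ≤ ∫ x in n * (2 * π)..n * (2 * π) + 2 * π, x ^ (β - 1) * sin x := by
  rw [integral_rpow_sub_one_mul_sin_add_two_pi hβ₀]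
  refine integral_nonneg (by linarith [pi_pos]) fun x hx => ?_
  have hn : 0 ≤ (n : ℝ) * (2 * π) := by positivity
  have hsin : 0 ≤ sin x := by
    rw [← sin_sub_nat_mul_two_pi x n]
    exact sin_nonneg_of_nonneg_of_le_pi (by linarith [hx.1]) (by linarith [hx.2])
  rcases (show (0 : ℝ) ≤ x by linarith [hx.1, pi_pos]).eq_or_lt with rfl | hx₀
  · simp
  · exact mul_nonneg (sub_nonneg.2 (rpow_le_rpow_of_nonpos hx₀ (by linarith [pi_pos])
      (by linarith))) hsin

theorem integral_rpow_sub_one_mul_sin_zero_two_pi_pos (hβ₀ : 0 < β) (hβ₁ : β < 1) :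
    0 < ∫ x in 0..2 * π, x ^ (β - 1) * sin x := by
  rw [← zero_add (2 * π), integral_rpow_sub_one_mul_sin_add_two_pi hβ₀, zero_add]
  have hcont : Continuous fun x : ℝ => (x ^ (β - 1) - (x + π) ^ (β - 1)) * sin x := by
    rw [← rpow_sub_one_mul_sin_add_comp_add_pi]
    exact (continuous_rpow_sub_one_mul_sin hβ₀).add
      ((continuous_rpow_sub_one_mul_sin hβ₀).comp (continuous_add_const π))
  refine intervalIntegral_pos_of_pos_on (hcont.intervalIntegrable _ _) (fun x hx => ?_) pi_pos
  exact mul_pos (sub_pos.2 (rpow_lt_rpow_of_neg hx.1 (by linarith [pi_pos]) (by linarith)))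
      (sin_pos_of_pos_of_lt_pi hx.1 hx.2)

theorem pos_of_tendsto_integral_rpow_sub_one_mul_sin (hβ₀ : 0 < β) (hβ₁ : β < 1) {I : ℝ}
    (hI : Tendsto (fun T : ℝ => ∫ x in 0..T, x ^ (β - 1) * sin x) atTop (nhds I)) : 0 < I := by
  set s : ℕ → ℝ := fun n => ∫ x in 0..n * (2 * π), x ^ (β - 1) * sin x
  have hint := (continuous_rpow_sub_one_mul_sin hβ₀).intervalIntegrable (μ := volume)
  have hs : Monotone s := monotone_nat_of_le_succ fun n => by
    simp only [s]
    rw [show ((n + 1 : ℕ) : ℝ) * (2 * π) = n * (2 * π) + 2 * π by push_cast; ring]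
    have hstep :=
      integral_interval_sub_left (hint 0 (n * (2 * π) + 2 * π)) (hint 0 (n * (2 * π)))
    linarith [integral_rpow_sub_one_mul_sin_period_nonneg hβ₀ hβ₁.le n]
  have hlim : Tendsto s atTop (nhds I) :=
    hI.comp (tendsto_natCast_atTop_atTop.atTop_mul_const (by positivity))
  have hs₁ : s 1 = ∫ x in 0..2 * π, x ^ (β - 1) * sin x := by simp [s]
  linarith [hs.ge_of_tendsto hlim 1, integral_rpow_sub_one_mul_sin_zero_two_pi_pos hβ₀ hβ₁]

end RpowSin

theorem fourier_coeff_asymptotics (β : ℝ) (hβ0 : 0 < β) (hβ1 : β < 1)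
    (c : ℕ → ℝ)
    (hc : ∀ k : ℕ, c k = (2 / π) * ∫ t in (0 : ℝ)..π, t ^ β * Real.cos ((k : ℝ) * t))
    (I : ℝ)
    (hI : Tendsto (fun T : ℝ => ∫ x in (0 : ℝ)..T, x ^ (β - 1) * Real.sin x)
      atTop (nhds I)) :
    Tendsto (fun k : ℕ => (k : ℝ) ^ (β + 1) * c k) atTop (nhds (-(2 * β / π) * I)) ∧
      -(2 * β / π) * I < 0 := by
  refine ⟨?_, ?_⟩
  · refine ((hI.comp (tendsto_natCast_atTop_atTop.atTop_mul_const pi_pos)).const_mul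
      (-(2 * β / π))).congr' ?_
    filter_upwards [eventually_ne_atTop 0] with k hk
    rw [Function.comp_apply, hc k, mul_left_comm,
      natCast_rpow_mul_integral_rpow_mul_cos_mul hβ0 hk]
    ring
  · exact mul_neg_of_neg_of_pos (neg_neg_of_pos (by positivity))
      (pos_of_tendsto_integral_rpow_sub_one_mul_sin hβ0 hβ1 hI)
end
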